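/- Let d be an (⊙,∨)-derivation on the standard MV-algebra I = [0,1] and let u ∈ I with u ≤ d(1). Define d^u : I → I by d^u(x) = u if x = 1 and d^u(x) = d(x) otherwise. Then d^u is an (⊙,∨)-derivation on I. -/
import Mathlib


/-- Łukasiewicz strong conjunction `x ⊙ y = max 0 (x + y - 1)` on the unit interval. -/
noncomputable def od (x y : unitInterval) : unitInterval :=
  ⟨max 0 (x.1 + y.1 - 1),
    ⟨le_max_left _ _, max_le zero_le_one (by have := x.2.2; have := y.2.2; linarith)⟩⟩

/-- Łukasiewicz strong disjunction `x ⊕ y = min 1 (x + y)` on the unit interval. -/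
noncomputable def op (x y : unitInterval) : unitInterval :=
  ⟨min 1 (x.1 + y.1),
    ⟨le_min zero_le_one (by have := x.2.1; have := y.2.1; linarith), min_le_left _ _⟩⟩

/-- `d` is an `(⊙,∨)`-derivation on the standard MV-algebra `[0,1]`:
`d (x ⊙ y) = (d x ⊙ y) ∨ (x ⊙ d y)` for all `x, y`. -/
def IsOdotDer (d : unitInterval → unitInterval) : Prop :=
  ∀ x y : unitInterval, d (od x y) = max (od (d x) y) (od x (d y))

lemma od_one_left (y : unitInterval) : od 1 y = y := by
  apply Subtype.ext
  simp only [od]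
  have := y.2.1
  simp only [Set.Icc.coe_one]
  rw [max_eq_right] <;> [ring; linarith]

lemma od_one_right (x : unitInterval) : od x 1 = x := by
  apply Subtype.ext
  simp only [od]
  have := x.2.1
  simp only [Set.Icc.coe_one]
  rw [max_eq_right] <;> [ring; linarith]

lemma od_mono_left {a b : unitInterval} (h : a ≤ b) (y : unitInterval) :
    od a y ≤ od b y := by
  have : (a : ℝ) ≤ b := h
  show (od a y : ℝ) ≤ od b y
  exact max_le_max le_rfl (by linarith)

lemma od_mono_right {a b : unitInterval} (h : a ≤ b) (y : unitInterval) :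
    od y a ≤ od y b := by
  have : (a : ℝ) ≤ b := h
  show (od y a : ℝ) ≤ od y b
  exact max_le_max le_rfl (by linarith)

lemma od_eq_one_iff {x y : unitInterval} : od x y = 1 ↔ x = 1 ∧ y = 1 := by
  constructor
  · intro h
    have h' : max 0 (x.1 + y.1 - 1) = 1 := congrArg Subtype.val h
    have hx := x.2.2; have hy := y.2.2
    have hx' := x.2.1; have hy' := y.2.1
    have hs : x.1 + y.1 - 1 = 1 := by
      rcases max_choice (0 : ℝ) (x.1 + y.1 - 1) with hc | hc <;> rw [hc] at h' <;> linarith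
    exact ⟨Subtype.ext (by show (x:ℝ) = ((1:unitInterval):ℝ); rw [Set.Icc.coe_one]; linarith), Subtype.ext (by show (y:ℝ) = ((1:unitInterval):ℝ); rw [Set.Icc.coe_one]; linarith)⟩
  · rintro ⟨rfl, rfl⟩
    exact od_one_left 1

/-- if d is an (⊙,∨)-derivation and u ≤ d 1, then the map d^u
sending 1 to u and agreeing with d elsewhere is also an (⊙,∨)-derivation. -/
theorem stmt10 (d : unitInterval → unitInterval) (hd : IsOdotDer d)
    (u : unitInterval) (hu : u ≤ d 1) :
    IsOdotDer (fun x => if x = 1 then u else d x) := by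
  intro x y
  by_cases hx : x = 1 <;> by_cases hy : y = 1
  · subst hx; subst hy
    simp [od_one_left, od_one_right]
  · subst hx
    have hxy : od 1 y = y := od_one_left y
    have h1 : od u y ≤ d y := by
      have := hd 1 y
      rw [hxy, od_one_left] at this
      calc od u y ≤ od (d 1) y := od_mono_left hu y
        _ ≤ max (od (d 1) y) (d y) := le_max_left _ _
        _ = d y := this.symm
    simp only [hxy]
    simp [hy, od_one_left, max_eq_right h1]
  · subst hy
    have hxy : od x 1 = x := od_one_right x
    have h1 : od x u ≤ d x := by
      have := hd x 1
      rw [hxy, od_one_right] at this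
      calc od x u ≤ od x (d 1) := od_mono_right hu x
        _ ≤ max (d x) (od x (d 1)) := le_max_right _ _
        _ = d x := this.symm
    simp only [hxy]
    simp [hx, od_one_right, max_eq_left h1]
  · have hxy : od x y ≠ 1 := fun h => hx (od_eq_one_iff.mp h).1
    simp only [if_neg hx, if_neg hy, if_neg hxy]
    exact hd x y
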